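/- arXiv:math/0603092 — 3 statements merged into one kernel-verified Lean document; each statement's English description precedes it below -/
import Mathlib

section
/- Let ε > 0, θe > 0, α > 0, and ξ ∈ ℝ³ with ξ ≠ 0, and let {ξ1, ξ2} be an orthonormal basis of the plane ξ^⊥ with ξ1 × ξ2 = ξ/|ξ|. Set λ_± := ±(1 + |ξ|² + ε²/θe²)^{1/2} and define the vectors e_± := ( |ξ| ξ2 / λ_±, ξ1, −i ξ1/λ_±, 0, (iε/θe) ξ1/λ_±, 0 ) and e'_± := ( −|ξ| ξ1 / λ_±, ξ2, −i ξ2/λ_±, 0, (iε/θe) ξ2/λ_±, 0 ) in ℂ^14. Then A_0(ε,ξ) e_± = λ_± e_± and A_0(ε,ξ) e'_± = λ_± e'_±; that is, e_± and e'_± are eigenvectors of the Euler–Maxwell symbol at u = 0 associated with the transverse Klein–Gordon eigenvalues λ_±. -/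
noncomputable section

open scoped Matrix

/-- The state space `ℂ³ × ℂ³ × ℂ³ × ℂ × ℂ³ × ℂ` of the linearized Euler–Maxwell system,
with coordinates `(B, E, v_e, n_e, v_i, n_i)`. -/
abbrev EMSpace :=
  (Fin 3 → ℂ) × (Fin 3 → ℂ) × (Fin 3 → ℂ) × ℂ × (Fin 3 → ℂ) × ℂ

/-- Complexification of a real frequency vector. -/
def ξC (ξ : Fin 3 → ℝ) : Fin 3 → ℂ := fun i => (ξ i : ℂ)

/-- The Euler–Maxwell symbol `A₀(ε,ξ)` at `u = 0`, acting on `(B,E,v_e,n_e,v_i,n_i)` by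
`A₀(ε,ξ)u = (ξ×E, −ξ×B + i v_e − i(ε/θe) v_i, −i E + θe ξ n_e, θe ξ·v_e,
i(ε/θe) E + εα ξ n_i, εα ξ·v_i)`. -/
def emSymbol (ε θe α : ℝ) (ξ : Fin 3 → ℝ) (u : EMSpace) : EMSpace :=
  ( crossProduct (ξC ξ) u.2.1,
    -(crossProduct (ξC ξ) u.1) + Complex.I • u.2.2.1
      - (Complex.I * ((ε / θe : ℝ) : ℂ)) • u.2.2.2.2.1,
    -(Complex.I • u.2.1) + ((θe : ℂ) * u.2.2.2.1) • ξC ξ,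
    (θe : ℂ) * ∑ i, ξC ξ i * u.2.2.1 i,
    (Complex.I * ((ε / θe : ℝ) : ℂ)) • u.2.1 + (((ε * α : ℝ) : ℂ) * u.2.2.2.2.2) • ξC ξ,
    ((ε * α : ℝ) : ℂ) * ∑ i, ξC ξ i * u.2.2.2.2.1 i )

/-- The convection operator `diag(0, 0, x I₃, x, y I₃, y)`. -/
def emConvection (x y : ℝ) (u : EMSpace) : EMSpace :=
  (0, 0, (x : ℂ) • u.2.2.1, (x : ℂ) * u.2.2.2.1,
    (y : ℂ) • u.2.2.2.2.1, (y : ℂ) * u.2.2.2.2.2)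

/-- Euclidean length of a real 3-vector. -/
def len3 (ξ : Fin 3 → ℝ) : ℝ := Real.sqrt (∑ i, ξ i ^ 2)

/-- Real dot product. -/
def dot3 (a b : Fin 3 → ℝ) : ℝ := ∑ i, a i * b i

/-!
For `E ⊥ ξ` one has `ξ × (ξ × E) = -|ξ|² E`. Hence if `B`, `v_e`, `v_i` are slaved to `E` by the
first, third and fifth rows of `A₀ u = λ u` (`transverseMode`), the second row reduces to the
Klein–Gordon relation `λ² = 1 + |ξ|² + (ε/θe)²`, and the densities stay `0`. The frame condition
`ξ1 × ξ2 = ξ/|ξ|` gives `ξ × ξ1 = |ξ| ξ2` and `ξ × ξ2 = -|ξ| ξ1`, which exhibits `e_±` and `e'_±`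
as the transverse modes with `E = ξ1` and `E = ξ2`.
-/

open Complex

theorem ξC_cross (a b : Fin 3 → ℝ) : ξC (a ⨯₃ b) = ξC a ⨯₃ ξC b := by
  ext i
  fin_cases i <;> simp [ξC, cross_apply]

theorem ξC_dotProduct (a b : Fin 3 → ℝ) : ξC a ⬝ᵥ ξC b = ((a ⬝ᵥ b : ℝ) : ℂ) := by
  simp [ξC, dotProduct]

theorem ξC_smul (c : ℝ) (a : Fin 3 → ℝ) : ξC (c • a) = (c : ℂ) • ξC a := by
  ext i
  simp [ξC]

theorem len3_sq (ξ : Fin 3 → ℝ) : len3 ξ ^ 2 = ξ ⬝ᵥ ξ := by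
  rw [len3, Real.sq_sqrt (by positivity)]
  simp [dotProduct, sq]

theorem len3_ne_zero {ξ : Fin 3 → ℝ} (hξ : ξ ≠ 0) : len3 ξ ≠ 0 :=
  fun h => hξ <| dotProduct_self_eq_zero.1 <| by rw [← len3_sq, h, sq, zero_mul]

theorem cross_eq_smul_of_eq_smul_cross {R : Type*} [CommRing R] {w u v : Fin 3 → R} {c : R}
    (hw : w = c • u ⨯₃ v) (hu : u ⬝ᵥ u = 1) (huv : u ⬝ᵥ v = 0) : w ⨯₃ u = c • v := by
  rw [hw, map_smul, LinearMap.smul_apply, cross_cross_eq_smul_sub_smul, hu, dotProduct_comm, huv,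
    one_smul, zero_smul, sub_zero]

def transverseMode (ε θe lam : ℝ) (ξ : Fin 3 → ℝ) (E : Fin 3 → ℂ) : EMSpace :=
  ((lam : ℂ)⁻¹ • (ξC ξ ⨯₃ E), E, (-I / lam) • E, 0, (I * ((ε / θe : ℝ) : ℂ) / lam) • E, 0)

theorem emSymbol_transverseMode (ε θe α lam : ℝ) (ξ : Fin 3 → ℝ) {E : Fin 3 → ℂ}
    (hE : ξC ξ ⬝ᵥ E = 0) (hlam : lam ^ 2 = 1 + len3 ξ ^ 2 + (ε / θe) ^ 2) :
    emSymbol ε θe α ξ (transverseMode ε θe lam ξ E) =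
      (lam : ℂ) • transverseMode ε θe lam ξ E := by
  have hlam0 : (lam : ℂ) ≠ 0 := by
    refine Complex.ofReal_ne_zero.2 fun h => ?_
    nlinarith [sq_nonneg (len3 ξ), sq_nonneg (ε / θe)]
  have hξξE : ξC ξ ⨯₃ (ξC ξ ⨯₃ E) = -((len3 ξ ^ 2 : ℝ) : ℂ) • E := by
    rw [cross_cross_eq_smul_sub_smul', hE, ξC_dotProduct, len3_sq, zero_smul, zero_sub, neg_smul]
  simp only [emSymbol, transverseMode, Prod.smul_mk, Prod.mk.injEq]
  refine ⟨?_, ?_, ?_, ?_, ?_, ?_⟩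
  · exact (smul_inv_smul₀ hlam0 _).symm
  · have hlamC : (lam : ℂ) ^ 2 = 1 + ((len3 ξ ^ 2 : ℝ) : ℂ) + ((ε / θe : ℝ) : ℂ) ^ 2 := by
      exact_mod_cast hlam
    rw [map_smul, hξξE]
    ext i
    simp only [Pi.add_apply, Pi.sub_apply, Pi.neg_apply, Pi.smul_apply, smul_eq_mul]
    field_simp
    linear_combination (-E i) * hlamC - E i * (1 + ((ε / θe : ℝ) : ℂ) ^ 2) * I_sq
  · rw [mul_zero, zero_smul, add_zero, smul_smul, mul_div_cancel₀ _ hlam0, neg_smul]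
  · change _ * (ξC ξ ⬝ᵥ _) = _
    rw [dotProduct_smul, hE, smul_zero, mul_zero, smul_zero]
  · rw [mul_zero, zero_smul, add_zero, smul_smul, mul_div_cancel₀ _ hlam0]
  · change _ * (ξC ξ ⬝ᵥ _) = _
    rw [dotProduct_smul, hE, smul_zero, mul_zero, smul_zero]

theorem stmt_15_general (ε θe α : ℝ)
    (ξ ξ1 ξ2 : Fin 3 → ℝ) (hξ : ξ ≠ 0)
    (hξ1 : len3 ξ1 = 1) (hξ2 : len3 ξ2 = 1)
    (hperp1 : dot3 ξ ξ1 = 0) (hperp2 : dot3 ξ ξ2 = 0) (hperp12 : dot3 ξ1 ξ2 = 0)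
    (hcross : crossProduct ξ1 ξ2 = (len3 ξ)⁻¹ • ξ)
    (sgn : ℝ) (hsgn : sgn = 1 ∨ sgn = -1) :
    let lam : ℝ := sgn * Real.sqrt (1 + len3 ξ ^ 2 + ε ^ 2 / θe ^ 2)
    let e : EMSpace :=
      ( ((len3 ξ / lam : ℝ) : ℂ) • ξC ξ2, ξC ξ1,
        (-Complex.I / (lam : ℂ)) • ξC ξ1, 0,
        (Complex.I * ((ε / θe : ℝ) : ℂ) / (lam : ℂ)) • ξC ξ1, 0 )
    let e' : EMSpace :=
      ( (-(len3 ξ / lam : ℝ) : ℂ) • ξC ξ1, ξC ξ2,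
        (-Complex.I / (lam : ℂ)) • ξC ξ2, 0,
        (Complex.I * ((ε / θe : ℝ) : ℂ) / (lam : ℂ)) • ξC ξ2, 0 )
    emSymbol ε θe α ξ e = (lam : ℂ) • e ∧ emSymbol ε θe α ξ e' = (lam : ℂ) • e' := by
  intro lam e e'
  have hlam : lam ^ 2 = 1 + len3 ξ ^ 2 + (ε / θe) ^ 2 := by
    have hsgn2 : sgn ^ 2 = 1 := by rcases hsgn with rfl | rfl <;> norm_num
    rw [mul_pow, hsgn2, one_mul, Real.sq_sqrt (by positivity), div_pow]
  have hξ_eq : ξ = len3 ξ • ξ1 ⨯₃ ξ2 := by rw [hcross, smul_inv_smul₀ (len3_ne_zero hξ)]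
  have hξ_cross1 : ξ ⨯₃ ξ1 = len3 ξ • ξ2 :=
    cross_eq_smul_of_eq_smul_cross hξ_eq (by rw [← len3_sq, hξ1, one_pow]) hperp12
  have hξ_cross2 : ξ ⨯₃ ξ2 = -len3 ξ • ξ1 := by
    refine cross_eq_smul_of_eq_smul_cross ?_ (by rw [← len3_sq, hξ2, one_pow])
      (by rwa [dotProduct_comm])
    rwa [neg_smul, ← smul_neg, cross_anticomm]
  have he : e = transverseMode ε θe lam ξ (ξC ξ1) := by
    simp only [e, transverseMode, ← ξC_cross, hξ_cross1, ξC_smul, smul_smul]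
    push_cast
    ring_nf
  have he' : e' = transverseMode ε θe lam ξ (ξC ξ2) := by
    simp only [e', transverseMode, ← ξC_cross, hξ_cross2, ξC_smul, smul_smul]
    push_cast
    ring_nf
  rw [he, he']
  exact ⟨emSymbol_transverseMode ε θe α lam ξ (by rw [ξC_dotProduct]; exact_mod_cast hperp1) hlam,
    emSymbol_transverseMode ε θe α lam ξ (by rw [ξC_dotProduct]; exact_mod_cast hperp2) hlam⟩

/-- **Transverse Klein–Gordon eigenvectors of the Euler–Maxwell symbol at `u = 0`.**
Let `ξ ≠ 0`, `{ξ1, ξ2}` an orthonormal basis of `ξ^⊥` with `ξ1 × ξ2 = ξ/|ξ|`, and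
`λ_± = ±√(1+|ξ|²+ε²/θe²)`. The vectors
`e_± = (|ξ|ξ2/λ_±, ξ1, −iξ1/λ_±, 0, (iε/θe)ξ1/λ_±, 0)` and
`e'_± = (−|ξ|ξ1/λ_±, ξ2, −iξ2/λ_±, 0, (iε/θe)ξ2/λ_±, 0)` satisfy
`A₀(ε,ξ) e_± = λ_± e_±` and `A₀(ε,ξ) e'_± = λ_± e'_±`. -/
theorem stmt_15 (ε θe α : ℝ) (hε : 0 < ε) (hθe : 0 < θe) (hα : 0 < α)
    (ξ ξ1 ξ2 : Fin 3 → ℝ) (hξ : ξ ≠ 0)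
    (hξ1 : len3 ξ1 = 1) (hξ2 : len3 ξ2 = 1)
    (hperp1 : dot3 ξ ξ1 = 0) (hperp2 : dot3 ξ ξ2 = 0) (hperp12 : dot3 ξ1 ξ2 = 0)
    (hcross : crossProduct ξ1 ξ2 = (len3 ξ)⁻¹ • ξ)
    (sgn : ℝ) (hsgn : sgn = 1 ∨ sgn = -1) :
    let lam : ℝ := sgn * Real.sqrt (1 + len3 ξ ^ 2 + ε ^ 2 / θe ^ 2)
    let e : EMSpace :=
      ( ((len3 ξ / lam : ℝ) : ℂ) • ξC ξ2, ξC ξ1,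
        (-Complex.I / (lam : ℂ)) • ξC ξ1, 0,
        (Complex.I * ((ε / θe : ℝ) : ℂ) / (lam : ℂ)) • ξC ξ1, 0 )
    let e' : EMSpace :=
      ( (-(len3 ξ / lam : ℝ) : ℂ) • ξC ξ1, ξC ξ2,
        (-Complex.I / (lam : ℂ)) • ξC ξ2, 0,
        (Complex.I * ((ε / θe : ℝ) : ℂ) / (lam : ℂ)) • ξC ξ2, 0 )
    emSymbol ε θe α ξ e = (lam : ℂ) • e ∧ emSymbol ε θe α ξ e' = (lam : ℂ) • e' :=
  stmt_15_general ε θe α ξ ξ1 ξ2 hξ hξ1 hξ2 hperp1 hperp2 hperp12 hcross sgn hsgn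

end
end

section
/- There exist θ* > 0 and c > 0 such that for every θe ∈ (0, θ*] the following holds: every solution ξ ∈ ℝ³ of the Klein–Gordon/Klein–Gordon resonance equation (1+|ξ|²)^{1/2} − (1+θe²|ξ|²)^{1/2} − 1 = 0 satisfies 1 ≤ |ξ| ≤ 2, and for every ξ with |ξ| < 1 or |ξ| > 2 one has |(1+|ξ|²)^{1/2} − (1+θe²|ξ|²)^{1/2} − 1| ≥ c, uniformly in θe ∈ (0, θ*]. -/
noncomputable section

lemma aux_phase_low (r θ : ℝ) (hr0 : 0 ≤ r) (hr : r < 1) (hθ : 0 < θ) :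
    (1:ℝ)/10 ≤ |Real.sqrt (1 + r ^ 2) - Real.sqrt (1 + θ ^ 2 * r ^ 2) - 1| := by
  have h1 : (1:ℝ) ≤ Real.sqrt (1 + θ ^ 2 * r ^ 2) := by
    have := Real.sqrt_le_sqrt (show (1:ℝ) ≤ 1 + θ ^ 2 * r ^ 2 by
      nlinarith [mul_nonneg (sq_nonneg θ) (sq_nonneg r)])
    simpa using this
  have h2 : Real.sqrt (1 + r ^ 2) ≤ 3/2 := by
    rw [show (3:ℝ)/2 = Real.sqrt ((3/2)^2) by rw [Real.sqrt_sq]; norm_num]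
    apply Real.sqrt_le_sqrt; nlinarith
  rw [abs_sub_comm, abs_of_nonneg (by linarith)] <;> linarith

lemma aux_phase_high (r θ : ℝ) (hr : 2 < r) (hθ0 : 0 < θ) (hθ : θ ≤ 1/100) :
    (1:ℝ)/10 ≤ |Real.sqrt (1 + r ^ 2) - Real.sqrt (1 + θ ^ 2 * r ^ 2) - 1| := by
  have hr0 : (0:ℝ) ≤ r := by linarith
  have h1 : Real.sqrt (1 + θ ^ 2 * r ^ 2) ≤ 1 + θ * r := by
    rw [show 1 + θ * r = Real.sqrt ((1 + θ * r)^2) by rw [Real.sqrt_sq]; positivity]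
    apply Real.sqrt_le_sqrt; nlinarith [mul_pos hθ0 (by linarith : (0:ℝ) < r)]
  have h2 : θ * r + 21/10 ≤ Real.sqrt (1 + r ^ 2) := by
    rw [show θ * r + 21/10 = Real.sqrt ((θ * r + 21/10)^2) by rw [Real.sqrt_sq]; positivity]
    apply Real.sqrt_le_sqrt
    nlinarith [sq_nonneg (r - 2), mul_nonneg (mul_nonneg hθ0.le hr0) (by linarith : (0:ℝ) ≤ r - 2)]
  rw [abs_of_nonneg (by linarith)]; linarith

/-- **Localization of the Klein–Gordon/Klein–Gordon resonances for Euler–Maxwell.**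
There exist `θ* > 0` and `c > 0` such that for every `θe ∈ (0, θ*]`: every solution
`ξ ∈ ℝ³` of `√(1+|ξ|²) − √(1+θe²|ξ|²) − 1 = 0` satisfies `1 ≤ |ξ| ≤ 2`, and the phase
is bounded below by `c` (uniformly in `θe`) outside that region. -/
theorem stmt_17 :
    ∃ θstar > (0:ℝ), ∃ c > (0:ℝ), ∀ θe : ℝ, θe ∈ Set.Ioc 0 θstar →
      (∀ ξ : EuclideanSpace ℝ (Fin 3),
        Real.sqrt (1 + ‖ξ‖ ^ 2) - Real.sqrt (1 + θe ^ 2 * ‖ξ‖ ^ 2) - 1 = 0 →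
          1 ≤ ‖ξ‖ ∧ ‖ξ‖ ≤ 2) ∧
      (∀ ξ : EuclideanSpace ℝ (Fin 3), ‖ξ‖ < 1 ∨ 2 < ‖ξ‖ →
        c ≤ |Real.sqrt (1 + ‖ξ‖ ^ 2) - Real.sqrt (1 + θe ^ 2 * ‖ξ‖ ^ 2) - 1|) := by
  refine ⟨1/100, by norm_num, 1/10, by norm_num, fun θe ⟨hθ0, hθ⟩ => ⟨?_, ?_⟩⟩
  · intro ξ hξ
    by_contra h
    push_neg at h
    rcases le_or_gt 1 ‖ξ‖ with h1 | h1
    · have := aux_phase_high ‖ξ‖ θe (h h1) hθ0 hθ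
      rw [hξ] at this; norm_num at this
    · have := aux_phase_low ‖ξ‖ θe (norm_nonneg ξ) h1 hθ0
      rw [hξ] at this; norm_num at this
  · intro ξ hξ
    rcases hξ with h | h
    · exact aux_phase_low ‖ξ‖ θe (norm_nonneg ξ) h hθ0
    · exact aux_phase_high ‖ξ‖ θe h hθ0 hθ
end
end

section
/- Let θe ∈ (0,1] and α ∈ [0,1]. There exist ε0 > 0 and C > 0 (one may take ε0 = θe/2 and C = 2) such that for every ε ∈ (0, ε0], every ξ ∈ ℝ³, and every real number ω with |ω| ≤ 1/2 satisfying (ω² − ε²α²|ξ|²)(ω² − 1 − θe²|ξ|²) − (ε²/θe²)(ω² − θe²|ξ|²) = 0, one has |ω| ≤ C ε |ξ|. (The small longitudinal roots of the Euler–Maxwell dispersion relation — the acoustic modes μ_s(e^+)_± — are O(ε|ξ|) uniformly in ε and ξ.) -/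
noncomputable section
set_option maxHeartbeats 1000000

/-- **The small longitudinal roots of the Euler–Maxwell dispersion relation are `O(ε|ξ|)`.**
Let `θe ∈ (0,1]`, `α ∈ [0,1]`. There exist `ε0 > 0` and `C > 0` such that for every
`ε ∈ (0,ε0]`, every `ξ ∈ ℝ³` and every real `ω` with `|ω| ≤ 1/2` solving the longitudinal
dispersion relation, one has `|ω| ≤ C ε |ξ|`. -/
theorem stmt_19 :
    ∀ θe ∈ Set.Ioc (0:ℝ) 1, ∀ α ∈ Set.Icc (0:ℝ) 1,
      ∃ ε0 > (0:ℝ), ∃ C > (0:ℝ),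
        ∀ ε ∈ Set.Ioc (0:ℝ) ε0, ∀ ξ : EuclideanSpace ℝ (Fin 3), ∀ ω : ℝ,
          |ω| ≤ 1/2 →
          (ω ^ 2 - ε ^ 2 * α ^ 2 * ‖ξ‖ ^ 2) * (ω ^ 2 - 1 - θe ^ 2 * ‖ξ‖ ^ 2)
              - (ε ^ 2 / θe ^ 2) * (ω ^ 2 - θe ^ 2 * ‖ξ‖ ^ 2) = 0 →
          |ω| ≤ C * ε * ‖ξ‖ := by
  intro θe hθe α hα
  obtain ⟨hθ0, hθ1⟩ := hθe
  obtain ⟨hα0, hα1⟩ := hα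
  refine ⟨1, one_pos, 2, two_pos, ?_⟩
  rintro ε ⟨hε0, hε1⟩ ξ ω hω heq
  set k := ‖ξ‖ with hk
  have hk0 : 0 ≤ k := norm_nonneg ξ
  have hω2 : ω ^ 2 ≤ 1/4 := by
    have := sq_abs ω
    nlinarith [abs_nonneg ω]
  -- main estimate: ω² ≤ 4 ε² k²
  have hmain : ω ^ 2 ≤ (2 * ε * k) ^ 2 := by
    by_contra hc
    push_neg at hc
    have hω2pos : 0 < ω ^ 2 := lt_of_le_of_lt (by positivity) hc
    have hεk : ε ^ 2 * k ^ 2 < ω ^ 2 / 4 := by nlinarith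
    have hA : (3/4) * ω ^ 2 ≤ ω ^ 2 - ε ^ 2 * α ^ 2 * k ^ 2 := by
      have h1 : (0:ℝ) ≤ (1 - α ^ 2) * (ε ^ 2 * k ^ 2) :=
        mul_nonneg (by nlinarith) (mul_nonneg (sq_nonneg ε) (sq_nonneg k))
      nlinarith
    have hB : ω ^ 2 - 1 - θe ^ 2 * k ^ 2 ≤ -(3/4) := by
      nlinarith [mul_nonneg (sq_nonneg θe) (sq_nonneg k)]
    have hApos : 0 < ω ^ 2 - ε ^ 2 * α ^ 2 * k ^ 2 := by nlinarith
    have hLHS : (ω ^ 2 - ε ^ 2 * α ^ 2 * k ^ 2) * (ω ^ 2 - 1 - θe ^ 2 * k ^ 2)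
        ≤ -(9/16) * ω ^ 2 := by
      calc (ω ^ 2 - ε ^ 2 * α ^ 2 * k ^ 2) * (ω ^ 2 - 1 - θe ^ 2 * k ^ 2)
          ≤ (ω ^ 2 - ε ^ 2 * α ^ 2 * k ^ 2) * (-(3/4)) := by
            exact mul_le_mul_of_nonneg_left hB (le_of_lt hApos)
        _ ≤ (3/4 * ω ^ 2) * (-(3/4)) := by linarith [hA]
        _ = -(9/16) * ω ^ 2 := by ring
    have hRHS : -(ε ^ 2 * k ^ 2) ≤ (ε ^ 2 / θe ^ 2) * (ω ^ 2 - θe ^ 2 * k ^ 2) := by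
      have hθ2 : (0:ℝ) < θe ^ 2 := by positivity
      have : (ε ^ 2 / θe ^ 2) * (ω ^ 2 - θe ^ 2 * k ^ 2)
          = (ε ^ 2 / θe ^ 2) * ω ^ 2 - ε ^ 2 * k ^ 2 := by
        field_simp
      rw [this]
      have hpos : (0:ℝ) ≤ ε ^ 2 / θe ^ 2 * ω ^ 2 := by positivity
      linarith
    linarith [hLHS, hRHS, hεk, hω2pos]
  have h2 : (0:ℝ) ≤ 2 * ε * k := by positivity
  have : |ω| ≤ 2 * ε * k := by
    refine le_of_pow_le_pow_left₀ two_ne_zero h2 ?_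
    rwa [sq_abs]
  linarith
end
end
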